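/- For all real x ≥ 2, the sum ∑_{p ≤ x} (log p)/p over primes p equals log x + O(1). -/
import Mathlib

open Finset Nat

-- P n = primes ≤ n
private def Pn (n : ℕ) : Finset ℕ := (Finset.range (n+1)).filter Nat.Prime

private lemma mem_Pn {p n : ℕ} : p ∈ Pn n ↔ p ≤ n ∧ p.Prime := by
  simp [Pn, Finset.mem_filter, Nat.lt_succ_iff, and_comm]

-- factorization of n! in ℕ bounds
private lemma fact_upper {p n : ℕ} (hp : p.Prime) :
    (n !).factorization p ≤ n / (p - 1) := by
  have h1 : emultiplicity p (n !) ≤ (n / (p - 1) : ℕ) :=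
    hp.emultiplicity_factorial_le_div_pred n
  have h2 : ((n !).factorization p : ℕ∞) ≤ emultiplicity p (n !) :=
    pow_dvd_iff_le_emultiplicity.1 (Nat.ordProj_dvd _ _)
  exact_mod_cast h2.trans h1

private lemma fact_lower {p n : ℕ} (hp : p.Prime) (hpn : p ≤ n) :
    n / p ≤ (n !).factorization p := by
  rw [← Nat.Prime.pow_dvd_iff_le_factorization hp n.factorial_ne_zero]
  rw [Nat.Prime.pow_dvd_factorial_iff hp (Nat.lt_succ_self _)]
  have h1 : 1 ∈ Finset.Ico 1 (Nat.log p n + 1) :=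
    Finset.mem_Ico.2 ⟨le_rfl, Nat.lt_succ_of_le (Nat.log_pos hp.one_lt hpn)⟩
  calc n / p = n / p ^ 1 := by rw [pow_one]
    _ ≤ ∑ i ∈ Finset.Ico 1 (Nat.log p n + 1), n / p ^ i :=
      Finset.single_le_sum (f := fun i => n / p ^ i) (fun i _ => Nat.zero_le _) h1

-- log n! = ∑ over primes ≤ n of factorization * log p
private lemma log_factorial_eq (n : ℕ) :
    Real.log (n !) = ∑ p ∈ Pn n, ((n !).factorization p : ℝ) * Real.log p := by
  have hsub : (n !).factorization.support ⊆ Pn n := by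
    intro p hp
    rw [Nat.support_factorization, Nat.mem_primeFactors] at hp
    exact mem_Pn.2 ⟨(Nat.Prime.dvd_factorial hp.1).1 hp.2.1, hp.1⟩
  have hprod : ∏ p ∈ Pn n, p ^ (n !).factorization p = n ! := by
    rw [← Finsupp.prod_of_support_subset _ hsub _ (fun i _ => pow_zero i)]
    exact Nat.factorization_prod_pow_eq_self n.factorial_ne_zero
  conv_lhs => rw [← hprod]
  push_cast
  rw [Real.log_prod]
  · refine Finset.sum_congr rfl fun p hp => ?_
    rw [Real.log_pow]
  · intro p hp
    have := (mem_Pn.1 hp).2.pos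
    positivity

-- theta bound via primorial
private lemma theta_le (n : ℕ) :
    ∑ p ∈ Pn n, Real.log p ≤ n * Real.log 4 := by
  have h1 : Real.log (primorial n) ≤ Real.log (4 ^ n : ℕ) := by
    apply Real.log_le_log (by exact_mod_cast (primorial_pos n))
    exact_mod_cast primorial_le_4_pow n
  calc ∑ p ∈ Pn n, Real.log p = Real.log (primorial n) := by
        rw [primorial]
        push_cast
        rw [Real.log_prod]
        · rfl
        · intro p hp
          simp only [Finset.mem_filter] at hp
          have := hp.2.pos
          positivity
    _ ≤ Real.log (4 ^ n : ℕ) := h1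
    _ = n * Real.log 4 := by push_cast; rw [Real.log_pow]

private noncomputable def K0 : ℝ := 4 * ∑' k : ℕ, 1 / (k : ℝ) ^ (3/2 : ℝ)

private lemma term_le {p : ℕ} (hp : p.Prime) :
    Real.log p / (p * (p - 1)) ≤ 4 * (1 / (p : ℝ) ^ (3/2 : ℝ)) := by
  have hp2 : (2 : ℝ) ≤ p := by exact_mod_cast hp.two_le
  have hp0 : (0 : ℝ) < p := by linarith
  have hlog : Real.log p ≤ 2 * Real.sqrt p := by
    have h1 : Real.log (Real.sqrt p) = Real.log p / 2 := Real.log_sqrt hp0.le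
    have := Real.log_le_sub_one_of_pos (Real.sqrt_pos.2 hp0)
    nlinarith [Real.sqrt_nonneg (p : ℝ)]
  have hps : (p : ℝ) ^ (3/2 : ℝ) = p * Real.sqrt p := by
    rw [show (3/2 : ℝ) = 1 + 1/2 by norm_num, Real.rpow_add hp0, Real.rpow_one,
      ← Real.sqrt_eq_rpow]
  have hsq : (1:ℝ) ≤ Real.sqrt p := by
    rw [show (1:ℝ) = Real.sqrt 1 by simp]
    exact Real.sqrt_le_sqrt (by linarith)
  rw [hps, mul_one_div]
  rw [div_le_div_iff₀ (by nlinarith) (by positivity)]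
  have hsqp : Real.sqrt p * Real.sqrt p = p := Real.mul_self_sqrt hp0.le
  nlinarith [mul_le_mul_of_nonneg_right hlog (by positivity : (0:ℝ) ≤ (p:ℝ) * Real.sqrt p), hsqp, hp2, Real.sqrt_nonneg (p:ℝ)]


private lemma K0_nonneg : 0 ≤ K0 := by
  unfold K0
  have : 0 ≤ ∑' k : ℕ, 1 / (k : ℝ) ^ (3/2 : ℝ) := tsum_nonneg (fun k => by positivity)
  linarith

private lemma Ksum_le (n : ℕ) : ∑ p ∈ Pn n, Real.log p / (p * ((p : ℝ) - 1)) ≤ K0 := by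
  have hsumm : Summable (fun k : ℕ => 1 / (k : ℝ) ^ (3/2 : ℝ)) :=
    Real.summable_one_div_nat_rpow.mpr (by norm_num)
  calc ∑ p ∈ Pn n, Real.log p / (p * ((p : ℝ) - 1))
      ≤ ∑ p ∈ Pn n, 4 * (1 / (p : ℝ) ^ (3/2 : ℝ)) := by
        refine Finset.sum_le_sum fun p hp => ?_
        exact term_le (mem_Pn.1 hp).2
    _ = 4 * ∑ p ∈ Pn n, 1 / (p : ℝ) ^ (3/2 : ℝ) := by rw [Finset.mul_sum]
    _ ≤ 4 * ∑' k : ℕ, 1 / (k : ℝ) ^ (3/2 : ℝ) := by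
        have := Summable.sum_le_tsum (Pn n) (fun k _ => by positivity) hsumm
        linarith
    _ = K0 := rfl

private lemma log_factorial_le (n : ℕ) : Real.log (n !) ≤ n * Real.log n := by
  calc Real.log (n !) ≤ Real.log ((n : ℝ) ^ n) := by
        apply Real.log_le_log (by exact_mod_cast n.factorial_pos)
        exact_mod_cast Nat.factorial_le_pow n
    _ = n * Real.log n := Real.log_pow n n

private lemma log_factorial_ge (n : ℕ) (hn : 1 ≤ n) :
    n * Real.log n - n ≤ Real.log (n !) := by
  have hkey : (n : ℝ) ^ n ≤ (n ! : ℝ) * Real.exp n := by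
    have h1 : (n : ℝ) ^ n / n ! ≤ Real.exp n := by
      calc (n : ℝ) ^ n / n ! ≤ ∑ i ∈ Finset.range (n+1), (n : ℝ) ^ i / i ! := by
            refine Finset.single_le_sum (f := fun i => (n : ℝ) ^ i / (i ! : ℝ))
              (fun i _ => by positivity) (Finset.self_mem_range_succ n)
        _ ≤ Real.exp n := Real.sum_le_exp_of_nonneg (by positivity) (n+1)
    have hf : (0 : ℝ) < n ! := by exact_mod_cast n.factorial_pos
    rw [div_le_iff₀ hf] at h1
    linarith [h1]
  have h2 := Real.log_le_log (by positivity) hkey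
  rw [Real.log_pow, Real.log_mul (by exact_mod_cast n.factorial_ne_zero)
    (Real.exp_ne_zero _), Real.log_exp] at h2
  linarith

private lemma main_n (n : ℕ) (hn : 2 ≤ n) :
    |(∑ p ∈ Pn n, Real.log p / p) - Real.log n| ≤ Real.log 4 + K0 + 1 := by
  set A := ∑ p ∈ Pn n, Real.log p / p with hA
  have hnR : (2 : ℝ) ≤ (n : ℝ) := by exact_mod_cast hn
  have hn0 : (0 : ℝ) < n := by linarith
  -- lower bound on log n!
  have hL1 : (n : ℝ) * A - n * Real.log 4 ≤ Real.log (n !) := by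
    have hterm : ∀ p ∈ Pn n,
        (n : ℝ) / p * Real.log p - Real.log p ≤ ((n !).factorization p : ℝ) * Real.log p := by
      intro p hp
      obtain ⟨hpn, hpp⟩ := mem_Pn.1 hp
      have hp0 : (0 : ℝ) < p := by exact_mod_cast hpp.pos
      have hlog0 : 0 ≤ Real.log p := Real.log_nonneg (by exact_mod_cast hpp.one_lt.le)
      have h1 : (n : ℝ) / p - 1 ≤ ((n !).factorization p : ℝ) := by
        have h2 : ((n / p : ℕ) : ℝ) ≤ ((n !).factorization p : ℝ) := by
          exact_mod_cast fact_lower hpp hpn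
        have h3 : (n : ℝ) < p * ((n / p : ℕ) + 1) := by
          have hdm := Nat.div_add_mod n p
          have hmd : n % p < p := Nat.mod_lt n hpp.pos
          have hdmR : (p : ℝ) * ((n / p : ℕ) : ℝ) + ((n % p : ℕ) : ℝ) = n := by
            exact_mod_cast hdm
          have hmdR : ((n % p : ℕ) : ℝ) < p := by exact_mod_cast hmd
          nlinarith
        have h4 : (n : ℝ) / p < ((n / p : ℕ) : ℝ) + 1 := by
          rw [div_lt_iff₀ hp0]; nlinarith
        linarith
      nlinarith
    calc (n : ℝ) * A - n * Real.log 4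
        ≤ ∑ p ∈ Pn n, ((n : ℝ) / p * Real.log p) - ∑ p ∈ Pn n, Real.log p := by
          have := theta_le n
          have h5 : (n : ℝ) * A = ∑ p ∈ Pn n, ((n : ℝ) / p * Real.log p) := by
            rw [hA, Finset.mul_sum]
            refine Finset.sum_congr rfl fun p hp => ?_
            field_simp
          rw [h5]; linarith
      _ = ∑ p ∈ Pn n, ((n : ℝ) / p * Real.log p - Real.log p) := by
          rw [Finset.sum_sub_distrib]
      _ ≤ ∑ p ∈ Pn n, ((n !).factorization p : ℝ) * Real.log p :=
          Finset.sum_le_sum hterm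
      _ = Real.log (n !) := (log_factorial_eq n).symm
  -- upper bound on log n!
  have hL2 : Real.log (n !) ≤ (n : ℝ) * A + n * K0 := by
    have hterm : ∀ p ∈ Pn n, ((n !).factorization p : ℝ) * Real.log p ≤
        (n : ℝ) / p * Real.log p + (n : ℝ) * (Real.log p / (p * ((p : ℝ) - 1))) := by
      intro p hp
      obtain ⟨hpn, hpp⟩ := mem_Pn.1 hp
      have hp2 : (2 : ℝ) ≤ p := by exact_mod_cast hpp.two_le
      have hp0 : (0 : ℝ) < p := by linarith
      have hlog0 : 0 ≤ Real.log p := Real.log_nonneg (by linarith)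
      have h1 : ((n !).factorization p : ℝ) ≤ (n : ℝ) / ((p : ℝ) - 1) := by
        have h2 : ((n !).factorization p : ℝ) ≤ ((n / (p - 1) : ℕ) : ℝ) := by
          exact_mod_cast fact_upper hpp
        have h3 : ((n / (p - 1) : ℕ) : ℝ) ≤ (n : ℝ) / ((p - 1 : ℕ) : ℝ) := Nat.cast_div_le
        have h4 : ((p - 1 : ℕ) : ℝ) = (p : ℝ) - 1 := by
          have := hpp.one_lt.le
          push_cast [Nat.cast_sub this]
          ring
        rw [h4] at h3
        linarith
      have hp1 : (p : ℝ) - 1 ≠ 0 := by linarith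
      have hpe : (p : ℝ) ≠ 0 := by linarith
      have h6 : (n : ℝ) / ((p : ℝ) - 1) * Real.log p
          = (n : ℝ) / p * Real.log p + (n : ℝ) * (Real.log p / (p * ((p : ℝ) - 1))) := by
        field_simp
        ring
      have h7 := mul_le_mul_of_nonneg_right h1 hlog0
      linarith
    calc Real.log (n !) = ∑ p ∈ Pn n, ((n !).factorization p : ℝ) * Real.log p :=
          log_factorial_eq n
      _ ≤ ∑ p ∈ Pn n, ((n : ℝ) / p * Real.log p + (n : ℝ) * (Real.log p / (p * ((p : ℝ) - 1)))) :=
          Finset.sum_le_sum hterm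
      _ = (n : ℝ) * A + (n : ℝ) * ∑ p ∈ Pn n, Real.log p / (p * ((p : ℝ) - 1)) := by
          rw [Finset.sum_add_distrib, ← Finset.mul_sum, hA, Finset.mul_sum]
          congr 1
          rw [Finset.mul_sum]
          refine Finset.sum_congr rfl fun p hp => ?_
          field_simp
      _ ≤ (n : ℝ) * A + n * K0 := by
          have := Ksum_le n
          nlinarith
  have hS1 := log_factorial_le n
  have hS2 := log_factorial_ge n (by omega)
  rw [abs_le]
  have hlog4 : 0 ≤ Real.log 4 := Real.log_nonneg (by norm_num)
  have hK := K0_nonneg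
  constructor
  · rw [neg_le, neg_sub]
    rw [← sub_nonneg]
    have : (n : ℝ) * (Real.log 4 + K0 + 1 - (Real.log n - A)) ≥ 0 := by nlinarith
    nlinarith
  · rw [← sub_nonneg]
    have : (n : ℝ) * (Real.log 4 + K0 + 1 - (A - Real.log n)) ≥ 0 := by nlinarith
    nlinarith

open Finset in
theorem stmt_5 : ∃ C : ℝ, ∀ x : ℝ, 2 ≤ x →
    |(∑ p ∈ (Finset.range (⌊x⌋₊ + 1)).filter Nat.Prime, Real.log p / p) - Real.log x| ≤ C := by
  refine ⟨Real.log 4 + K0 + 1 + Real.log 2, fun x hx => ?_⟩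
  set n := ⌊x⌋₊ with hn
  have hn2 : 2 ≤ n := Nat.le_floor (by exact_mod_cast hx)
  have hx0 : (0 : ℝ) ≤ x := by linarith
  have hnx : (n : ℝ) ≤ x := Nat.floor_le hx0
  have hxn : x < n + 1 := Nat.lt_floor_add_one x
  have hnR : (2 : ℝ) ≤ (n : ℝ) := by exact_mod_cast hn2
  have hlogs : |Real.log n - Real.log x| ≤ Real.log 2 := by
    rw [abs_le]
    constructor
    · have h1 : Real.log x ≤ Real.log (2 * n) := by
        apply Real.log_le_log (by linarith)
        linarith
      rw [Real.log_mul (by norm_num) (by linarith)] at h1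
      linarith
    · have h1 : Real.log n ≤ Real.log x := Real.log_le_log (by linarith) hnx
      have h2 : (0:ℝ) ≤ Real.log 2 := Real.log_nonneg (by norm_num)
      linarith
  have hmain := main_n n hn2
  have heq : (∑ p ∈ (Finset.range (⌊x⌋₊ + 1)).filter Nat.Prime, Real.log p / p)
      = ∑ p ∈ Pn n, Real.log p / p := rfl
  rw [heq]
  calc |(∑ p ∈ Pn n, Real.log p / p) - Real.log x|
      ≤ |(∑ p ∈ Pn n, Real.log p / p) - Real.log n| + |Real.log n - Real.log x| := by
        have := abs_sub_le (∑ p ∈ Pn n, Real.log p / p) (Real.log n) (Real.log x)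
        linarith
    _ ≤ Real.log 4 + K0 + 1 + Real.log 2 := by linarith
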